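/- Let I be a Γ-order-ideal of a commutative refinement Γ-monoid T. Then T has a Γ-composition series if and only if both I and T/I have Γ-composition series. -/

import Mathlib

/-!
A `Γ`-composition series of `M` is the same thing as a finite chain of covers from `{0}` to `M`
in the poset of `Γ`-order-ideals of `M`, since `J/I` is simple exactly when `J` covers `I`.
The ideals of the ideal `I` are the ideals of `T` below `I`, and those of `T/I` are the ideals
of `T` above `I`, so the claim reads: there is a cover chain `{0} → T` iff there are cover
chains `{0} → I` and `I → T`. In a refinement monoid the sum of two ideals is an ideal and the
ideals form a modular lattice, so intersecting with `I` and adding `I` turn a cover chain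
`{0} → T` into chains of weak covers `{0} → I` and `I → T`; the converse is concatenation.
-/

open Pointwise

namespace JH

variable {Γ : Type*} {T : Type*} [AddCommMonoid T]

/-- `x ρ_H y` iff `(x+H) ∩ (y+H) ≠ ∅`. -/
def rho (H : Set T) (x y : T) : Prop := ∃ h₁ ∈ H, ∃ h₂ ∈ H, x + h₁ = y + h₂

/-- The congruence on `T` induced by a submonoid `I`. -/
def subCon (I : AddSubmonoid T) : AddCon T where
  r := rho (I : Set T)
  iseqv := by
    constructor
    · exact fun x => ⟨0, I.zero_mem, 0, I.zero_mem, rfl⟩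
    · rintro x y ⟨h₁, m₁, h₂, m₂, e⟩; exact ⟨h₂, m₂, h₁, m₁, e.symm⟩
    · rintro x y z ⟨h₁, m₁, h₂, m₂, e₁⟩ ⟨k₁, n₁, k₂, n₂, e₂⟩
      refine ⟨h₁ + k₁, I.add_mem m₁ n₁, k₂ + h₂, I.add_mem n₂ m₂, ?_⟩
      calc x + (h₁ + k₁) = (x + h₁) + k₁ := (add_assoc _ _ _).symm
        _ = (y + h₂) + k₁ := by rw [e₁]
        _ = (y + k₁) + h₂ := add_right_comm _ _ _
        _ = (z + k₂) + h₂ := by rw [e₂]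
        _ = z + (k₂ + h₂) := add_assoc _ _ _
  add' := by
    rintro w x y z ⟨h₁, m₁, h₂, m₂, e₁⟩ ⟨k₁, n₁, k₂, n₂, e₂⟩
    refine ⟨h₁ + k₁, I.add_mem m₁ n₁, h₂ + k₂, I.add_mem m₂ n₂, ?_⟩
    calc w + y + (h₁ + k₁) = (w + h₁) + (y + k₁) := add_add_add_comm _ _ _ _
      _ = (x + h₂) + (z + k₂) := by rw [e₁, e₂]
      _ = x + z + (h₂ + k₂) := (add_add_add_comm _ _ _ _).symm

/-- The quotient monoid `T/I`. -/
abbrev QuotM (I : AddSubmonoid T) : Type _ := (subCon I).Quotient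

variable [CommGroup Γ] [DistribMulAction Γ T]

/-- A `Γ`-order-ideal of a `Γ`-monoid: `α•a + β•b ∈ I ↔ a ∈ I ∧ b ∈ I`. -/
def IsOrdIdeal (Γ : Type*) {T : Type*} [CommGroup Γ] [AddCommMonoid T]
    [DistribMulAction Γ T] (I : Set T) : Prop :=
  (0 : T) ∈ I ∧ ∀ (α β : Γ) (a b : T), α • a + β • b ∈ I ↔ a ∈ I ∧ b ∈ I

theorem IsOrdIdeal.add_mem {I : Set T} (h : IsOrdIdeal Γ I) {a b : T}
    (ha : a ∈ I) (hb : b ∈ I) : a + b ∈ I := by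
  have := (h.2 1 1 a b).mpr ⟨ha, hb⟩
  simpa using this

/-- A `Γ`-order-ideal as an additive submonoid. -/
def IsOrdIdeal.asSubmonoid {I : Set T} (h : IsOrdIdeal Γ I) : AddSubmonoid T where
  carrier := I
  zero_mem' := h.1
  add_mem' := fun ha hb => h.add_mem ha hb

theorem IsOrdIdeal.smul_mem {I : Set T} (h : IsOrdIdeal Γ I) (α : Γ) {x : T}
    (hx : x ∈ I) : α • x ∈ I := by
  have := (h.2 α 1 x 0).mpr ⟨hx, h.1⟩
  simpa using this

/-- The induced scalar action on the quotient. -/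
def quotSMulFun {I : Set T} (h : IsOrdIdeal Γ I) (α : Γ) :
    QuotM h.asSubmonoid → QuotM h.asSubmonoid :=
  Quotient.map' (fun x => α • x) (by
    rintro x y ⟨h₁, m₁, h₂, m₂, e⟩
    exact ⟨α • h₁, h.smul_mem α m₁, α • h₂, h.smul_mem α m₂, by
      rw [← smul_add, ← smul_add, e]⟩)

/-- The induced `Γ`-action on the quotient monoid `T/I`. -/
def quotAction {I : Set T} (h : IsOrdIdeal Γ I) :
    DistribMulAction Γ (QuotM h.asSubmonoid) where
  smul := quotSMulFun h
  one_smul q := by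
    refine Quotient.inductionOn' q (fun x => ?_)
    show Quotient.mk'' ((1 : Γ) • x) = Quotient.mk'' x
    rw [one_smul]
  mul_smul α β q := by
    refine Quotient.inductionOn' q (fun x => ?_)
    show Quotient.mk'' ((α * β) • x) = Quotient.mk'' (α • β • x)
    rw [mul_smul]
  smul_zero α := by
    show Quotient.mk'' (α • (0 : T)) = Quotient.mk'' (0 : T)
    rw [smul_zero]
  smul_add α q r := by
    refine Quotient.inductionOn₂' q r (fun x y => ?_)
    show Quotient.mk'' (α • (x + y)) = Quotient.mk'' (α • x + α • y)
    rw [smul_add]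

/-- The `Γ`-action on a `Γ`-order-ideal, viewed as a submonoid. -/
def subtypeAction {J : Set T} (hJ : IsOrdIdeal Γ J) :
    DistribMulAction Γ ↥hJ.asSubmonoid where
  smul α x := ⟨α • (x : T), hJ.smul_mem α x.2⟩
  one_smul x := Subtype.ext (one_smul Γ (x : T))
  mul_smul α β x := Subtype.ext (mul_smul α β (x : T))
  smul_zero α := Subtype.ext (smul_zero α)
  smul_add α x y := Subtype.ext (smul_add α (x : T) (y : T))

/-- The restriction of a set `I` to (the submonoid given by) an ideal `J`. -/
def restrictSet {J : Set T} (hJ : IsOrdIdeal Γ J) (I : Set T) :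
    Set ↥hJ.asSubmonoid := {x | (x : T) ∈ I}

theorem restrict_isOrdIdeal {I J : Set T} (hI : IsOrdIdeal Γ I) (hJ : IsOrdIdeal Γ J) :
    @IsOrdIdeal Γ ↥hJ.asSubmonoid _ _ (subtypeAction hJ) (restrictSet hJ I) := by
  refine ⟨hI.1, fun α β a b => ?_⟩
  exact hI.2 α β (a : T) (b : T)

/-- The quotient `Γ`-monoid `J/I` of two `Γ`-order-ideals. -/
abbrev QuotPair {I J : Set T} (hI : IsOrdIdeal Γ I) (hJ : IsOrdIdeal Γ J) : Type _ :=
  QuotM (@IsOrdIdeal.asSubmonoid Γ _ _ _ (subtypeAction hJ) _ (restrict_isOrdIdeal hI hJ))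

/-- The induced `Γ`-action on `J/I`. -/
def quotPairAction {I J : Set T} (hI : IsOrdIdeal Γ I) (hJ : IsOrdIdeal Γ J) :
    DistribMulAction Γ (QuotPair hI hJ) :=
  letI := subtypeAction hJ
  quotAction (restrict_isOrdIdeal hI hJ)

/-- A simple `Γ`-monoid: nontrivial with no `Γ`-order-ideals except `0` and itself. -/
def IsSimple (Γ : Type*) (M : Type*) [CommGroup Γ] [AddCommMonoid M]
    [DistribMulAction Γ M] : Prop :=
  (∃ x : M, x ≠ 0) ∧ ∀ I : Set M, IsOrdIdeal Γ I → I = {0} ∨ I = Set.univ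

/-- A refinement monoid. -/
def Refinement (T : Type*) [AddCommMonoid T] : Prop :=
  ∀ a b c d : T, a + b = c + d →
    ∃ e₁ e₂ e₃ e₄ : T, a = e₁ + e₂ ∧ b = e₃ + e₄ ∧ c = e₁ + e₃ ∧ d = e₂ + e₄

/-- `Γ`-equivariant monoid isomorphism. -/
def IsGammaIso (Γ : Type*) (M N : Type*) [CommGroup Γ] [AddCommMonoid M]
    [AddCommMonoid N] [DistribMulAction Γ M] [DistribMulAction Γ N] : Prop :=
  ∃ e : M ≃+ N, ∀ (α : Γ) (x : M), e (α • x) = α • (e x)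

/-- A `Γ`-composition series of a `Γ`-monoid. -/
structure CompSeries (Γ : Type*) (M : Type*) [CommGroup Γ] [AddCommMonoid M]
    [DistribMulAction Γ M] where
  n : ℕ
  I : ℕ → Set M
  ideal : ∀ i, i ≤ n → IsOrdIdeal Γ (I i)
  bot : I 0 = {0}
  top : I n = Set.univ
  strict : ∀ i, i < n → I i ⊂ I (i + 1)
  simple : ∀ i (h : i < n),
    @IsSimple Γ (QuotPair (ideal i h.le) (ideal (i + 1) h)) _ _
      (quotPairAction (ideal i h.le) (ideal (i + 1) h))

/-- `Γ`-Noetherian: every ascending chain of `Γ`-order-ideals stabilizes. -/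
def GammaNoetherian (Γ : Type*) (T : Type*) [CommGroup Γ] [AddCommMonoid T]
    [DistribMulAction Γ T] : Prop :=
  ∀ A : ℕ → Set T, (∀ i, IsOrdIdeal Γ (A i)) → (∀ i, A i ⊆ A (i + 1)) →
    ∃ n, ∀ i, n ≤ i → A i = A n

/-- `Γ`-Artinian: every descending chain of `Γ`-order-ideals stabilizes. -/
def GammaArtinian (Γ : Type*) (T : Type*) [CommGroup Γ] [AddCommMonoid T]
    [DistribMulAction Γ T] : Prop :=
  ∀ A : ℕ → Set T, (∀ i, IsOrdIdeal Γ (A i)) → (∀ i, A (i + 1) ⊆ A i) →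
    ∃ n, ∀ i, n ≤ i → A i = A n

/-- Partial sums `I 0 + ⋯ + I (t-1)` of a family of subsets, as submonoids. -/
def sumSeq (I : ℕ → Set T) : ℕ → AddSubmonoid T
  | 0 => ⊥
  | t + 1 => sumSeq I t ⊔ AddSubmonoid.closure (I t)

open Relation

section CoverChains

variable {α β : Type*} [PartialOrder α] [PartialOrder β]

theorem le_of_reflTransGen_wcovBy {a b : α} (h : ReflTransGen (· ⩿ ·) a b) : a ≤ b := by
  induction h with
  | refl => exact le_rfl
  | tail _ hbc ih => exact ih.trans hbc.le

theorem exists_covBy_seq_of_reflTransGen_wcovBy {a b : α} (h : ReflTransGen (· ⩿ ·) a b) :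
    ∃ (n : ℕ) (f : ℕ → α), f 0 = a ∧ f n = b ∧ ∀ i < n, f i ⋖ f (i + 1) := by
  induction h using Relation.ReflTransGen.head_induction_on with
  | refl => exact ⟨0, fun _ => b, rfl, rfl, fun i hi => absurd hi (Nat.not_lt_zero i)⟩
  | @head a c hac _ ih =>
    obtain ⟨n, f, rfl, hfn, hf⟩ := ih
    rcases wcovBy_iff_covBy_or_eq.1 hac with hac | rfl
    · refine ⟨n + 1, fun | 0 => a | i + 1 => f i, rfl, hfn, fun i hi => ?_⟩
      cases i with
      | zero => exact hac
      | succ i => exact hf i (by omega)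
    · exact ⟨n, f, rfl, hfn, hf⟩

theorem _root_.Set.OrdConnected.reflTransGen_wcovBy_apply_iff (f : α ↪o β)
    (hf : (Set.range f).OrdConnected) {a b : α} :
    ReflTransGen (· ⩿ ·) (f a) (f b) ↔ ReflTransGen (· ⩿ ·) a b := by
  refine ⟨fun h => ?_, fun h => h.lift f fun x y hxy => (hf.apply_wcovBy_apply_iff f).2 hxy⟩
  suffices ∀ x, ReflTransGen (· ⩿ ·) x (f b) → ∀ a, x = f a → ReflTransGen (· ⩿ ·) a b from
    this _ h a rfl
  intro x hx
  induction hx using Relation.ReflTransGen.head_induction_on with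
  | refl => exact fun a hab => f.injective hab ▸ ReflTransGen.refl
  | head hxy hyb ih =>
    rintro a rfl
    -- every step of the chain lies between `f a` and `f b`, hence in the range of `f`
    obtain ⟨c, rfl⟩ := hf.out (Set.mem_range_self a) (Set.mem_range_self b)
      ⟨hxy.le, le_of_reflTransGen_wcovBy hyb⟩
    exact .head ((hf.apply_wcovBy_apply_iff f).1 hxy) (ih c rfl)

end CoverChains

theorem IsOrdIdeal.add_mem_iff {X : Set T} (hX : IsOrdIdeal Γ X) {a b : T} :
    a + b ∈ X ↔ a ∈ X ∧ b ∈ X := by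
  simpa using hX.2 1 1 a b

theorem IsOrdIdeal.univ : IsOrdIdeal Γ (Set.univ : Set T) :=
  ⟨trivial, by simp⟩

theorem IsOrdIdeal.inter {X Y : Set T} (hX : IsOrdIdeal Γ X) (hY : IsOrdIdeal Γ Y) :
    IsOrdIdeal Γ (X ∩ Y) :=
  ⟨⟨hX.1, hY.1⟩, fun α β a b => by simp only [Set.mem_inter_iff, hX.2, hY.2]; tauto⟩

theorem IsOrdIdeal.add (hT : Refinement T) {X Y : Set T} (hX : IsOrdIdeal Γ X)
    (hY : IsOrdIdeal Γ Y) : IsOrdIdeal Γ (X + Y) := by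
  refine ⟨⟨0, hX.1, 0, hY.1, add_zero 0⟩, fun α β a b => ⟨?_, ?_⟩⟩
  · rintro ⟨x, hx, y, hy, hxy⟩
    obtain ⟨e₁, e₂, e₃, e₄, ha, hb, rfl, rfl⟩ := hT _ _ _ _ hxy.symm
    rw [hX.add_mem_iff] at hx
    rw [hY.add_mem_iff] at hy
    refine ⟨⟨α⁻¹ • e₁, hX.smul_mem _ hx.1, α⁻¹ • e₂, hY.smul_mem _ hy.1, ?_⟩,
      ⟨β⁻¹ • e₃, hX.smul_mem _ hx.2, β⁻¹ • e₄, hY.smul_mem _ hy.2, ?_⟩⟩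
    · show α⁻¹ • e₁ + α⁻¹ • e₂ = a
      rw [← smul_add, ← ha, inv_smul_smul]
    · show β⁻¹ • e₃ + β⁻¹ • e₄ = b
      rw [← smul_add, ← hb, inv_smul_smul]
  · rintro ⟨⟨x₁, hx₁, y₁, hy₁, rfl⟩, ⟨x₂, hx₂, y₂, hy₂, rfl⟩⟩
    refine ⟨α • x₁ + β • x₂, (hX.2 α β _ _).2 ⟨hx₁, hx₂⟩,
      α • y₁ + β • y₂, (hY.2 α β _ _).2 ⟨hy₁, hy₂⟩, ?_⟩
    show _ + _ = _
    rw [smul_add, smul_add, add_add_add_comm]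

abbrev OrdIdeal (Γ M : Type*) [CommGroup Γ] [AddCommMonoid M] [DistribMulAction Γ M] :
    Type _ :=
  {S : Set M // IsOrdIdeal Γ S}

namespace OrdIdeal

instance : OrderTop (OrdIdeal Γ T) where
  top := ⟨Set.univ, IsOrdIdeal.univ⟩
  le_top _ := Set.subset_univ _

instance : SemilatticeInf (OrdIdeal Γ T) :=
  Subtype.semilatticeInf fun _ _ => IsOrdIdeal.inter

variable {A B C : OrdIdeal Γ T}

def sum (hT : Refinement T) (A B : OrdIdeal Γ T) : OrdIdeal Γ T := ⟨A.1 + B.1, A.2.add hT B.2⟩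

theorem le_sum_left (hT : Refinement T) : A ≤ sum hT A B :=
  fun a ha => ⟨a, ha, 0, B.2.1, add_zero a⟩

theorem le_sum_right (hT : Refinement T) : B ≤ sum hT A B :=
  fun b hb => ⟨0, A.2.1, b, hb, zero_add b⟩

theorem sum_le (hT : Refinement T) (hA : A ≤ C) (hB : B ≤ C) : sum hT A B ≤ C := by
  rintro _ ⟨a, ha, b, hb, rfl⟩
  exact C.2.add_mem (hA ha) (hB hb)

theorem sum_eq_right (hT : Refinement T) (h : A ≤ B) : sum hT A B = B :=
  le_antisymm (sum_le hT h le_rfl) (le_sum_right hT)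

theorem sum_eq_left (hT : Refinement T) (h : B ≤ A) : sum hT A B = A :=
  le_antisymm (sum_le hT le_rfl h) (le_sum_left hT)

theorem inf_wcovBy_inf (hT : Refinement T) (h : A ⩿ B) (C : OrdIdeal Γ T) :
    A ⊓ C ⩿ B ⊓ C := by
  refine wcovBy_of_eq_or_eq (inf_le_inf_right C h.le) fun D hAD hDB => ?_
  rcases h.eq_or_eq (le_sum_right hT) (sum_le hT (hDB.trans inf_le_left) h.le) with hA | hB
  · exact Or.inl (le_antisymm (le_inf (hA ▸ le_sum_left hT) (hDB.trans inf_le_right)) hAD)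
  · refine Or.inr (le_antisymm hDB fun x hx => ?_)
    obtain ⟨d, hd, a, ha, rfl⟩ : x ∈ D.1 + A.1 := by rw [← hB] at hx; exact hx.1
    exact D.2.add_mem hd (hAD ⟨ha, (C.2.add_mem_iff.1 hx.2).2⟩)

theorem sum_wcovBy_sum (hT : Refinement T) (h : A ⩿ B) (C : OrdIdeal Γ T) :
    sum hT A C ⩿ sum hT B C := by
  refine wcovBy_of_eq_or_eq (sum_le hT (h.le.trans (le_sum_left hT)) (le_sum_right hT))
    fun D hAD hDB => ?_
  rcases h.eq_or_eq (le_inf ((le_sum_left hT).trans hAD) h.le) inf_le_right with hA | hB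
  · refine Or.inl (le_antisymm (fun x hx => ?_) hAD)
    obtain ⟨b, hb, c, hc, rfl⟩ := hDB hx
    exact ⟨b, hA ▸ ⟨(D.2.add_mem_iff.1 hx).1, hb⟩, c, hc, rfl⟩
  · exact Or.inr (le_antisymm hDB
      (sum_le hT (hB ▸ inf_le_left) ((le_sum_right hT).trans hAD)))

theorem reflTransGen_wcovBy_iff (hT : Refinement T) {Z W : OrdIdeal Γ T} (hZC : Z ≤ C)
    (hCW : C ≤ W) :
    ReflTransGen (· ⩿ ·) Z W ↔ ReflTransGen (· ⩿ ·) Z C ∧ ReflTransGen (· ⩿ ·) C W := by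
  refine ⟨fun h => ⟨?_, ?_⟩, fun h => h.1.trans h.2⟩
  · have : ReflTransGen (· ⩿ ·) (Z ⊓ C) (W ⊓ C) :=
      h.lift (· ⊓ C) fun _ _ hAB => inf_wcovBy_inf hT hAB C
    rwa [inf_eq_left.2 hZC, inf_eq_right.2 hCW] at this
  · have : ReflTransGen (· ⩿ ·) (sum hT Z C) (sum hT W C) :=
      h.lift (sum hT · C) fun _ _ hAB => sum_wcovBy_sum hT hAB C
    rwa [sum_eq_right hT hZC, sum_eq_left hT hCW] at this

end OrdIdeal

-- `{0}` is a `Γ`-order-ideal only when `T` is conical, so `OrdIdeal Γ T` may have no bottom.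
theorem isSimple_iff_covBy (Z : OrdIdeal Γ T) (hZ : (Z : Set T) = {0}) :
    IsSimple Γ T ↔ Z ⋖ ⊤ := by
  obtain ⟨Z, hZ'⟩ := Z
  subst hZ
  rw [covBy_iff_lt_and_eq_or_eq]
  refine and_congr ?_ ⟨fun h D _ _ => (h D.1 D.2).imp Subtype.ext Subtype.ext,
    fun h D hD => (h ⟨D, hD⟩ (Set.singleton_subset_iff.2 hD.1) le_top).imp
      (congrArg Subtype.val) (congrArg Subtype.val)⟩
  rw [← Subtype.coe_lt_coe]
  change _ ↔ {0} ⊂ Set.univ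
  simp [Set.ssubset_univ_iff, Set.ne_univ_iff_exists_notMem]

section SubIdeal

variable {J : Set T} (hJ : IsOrdIdeal Γ J)

theorem isOrdIdeal_image_val {S : Set ↥hJ.asSubmonoid}
    (hS : @IsOrdIdeal Γ _ _ _ (subtypeAction hJ) S) : IsOrdIdeal Γ (Subtype.val '' S) := by
  let := subtypeAction hJ
  refine ⟨⟨0, hS.1, rfl⟩, fun α β a b => ⟨?_, ?_⟩⟩
  · rintro ⟨s, hs, es⟩
    obtain ⟨ha, hb⟩ := (hJ.2 α β a b).1 (es ▸ s.2)
    rw [show s = α • (⟨a, ha⟩ : ↥hJ.asSubmonoid) + β • ⟨b, hb⟩ from Subtype.ext es,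
      hS.2] at hs
    exact ⟨⟨_, hs.1, rfl⟩, ⟨_, hs.2, rfl⟩⟩
  · rintro ⟨⟨x, hx, rfl⟩, ⟨y, hy, rfl⟩⟩
    exact ⟨α • x + β • y, (hS.2 α β x y).2 ⟨hx, hy⟩, rfl⟩

theorem image_val_restrictSet {G : Set T} (hG : G ⊆ J) :
    Subtype.val '' restrictSet hJ G = G :=
  Set.Subset.antisymm (by rintro _ ⟨y, hy, rfl⟩; exact hy) fun x hx => ⟨⟨x, hG hx⟩, hx, rfl⟩

def subIdealEmb : @OrdIdeal Γ ↥hJ.asSubmonoid _ _ (subtypeAction hJ) ↪o OrdIdeal Γ T :=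
  OrderEmbedding.ofMapLEIff (fun S => ⟨Subtype.val '' S.1, isOrdIdeal_image_val hJ S.2⟩)
    fun _ _ => Set.image_subset_image_iff Subtype.val_injective

theorem range_subIdealEmb : Set.range (subIdealEmb hJ) = Set.Iic ⟨J, hJ⟩ := by
  ext D
  refine ⟨?_, fun hDJ => ⟨⟨_, restrict_isOrdIdeal D.2 hJ⟩,
    Subtype.ext (image_val_restrictSet hJ hDJ)⟩⟩
  rintro ⟨S, rfl⟩ _ ⟨x, _, rfl⟩
  exact x.2

theorem ordConnected_range_subIdealEmb : (Set.range (subIdealEmb hJ)).OrdConnected := by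
  rw [range_subIdealEmb]
  exact Set.ordConnected_Iic

theorem subIdealEmb_top : letI := subtypeAction hJ; subIdealEmb hJ ⊤ = ⟨J, hJ⟩ :=
  Subtype.ext <| Set.Subset.antisymm (by rintro _ ⟨y, -, rfl⟩; exact y.2)
    fun x hx => ⟨⟨x, hx⟩, trivial, rfl⟩

theorem coe_subIdealEmb_eq_zero_iff (S : @OrdIdeal Γ ↥hJ.asSubmonoid _ _ (subtypeAction hJ)) :
    (subIdealEmb hJ S : Set T) = {0} ↔ (S : Set ↥hJ.asSubmonoid) = {0} :=
  (Set.image_injective.2 Subtype.val_injective).eq_iff' (Set.image_singleton.trans rfl)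

end SubIdeal

section QuotIdeal

variable {K : Set T} (hK : IsOrdIdeal Γ K)

theorem mk_eq_zero_iff {x : T} : (x : QuotM hK.asSubmonoid) = 0 ↔ x ∈ K := by
  refine (subCon _).eq.trans ⟨fun ⟨h₁, _, h₂, m₂, e⟩ => ?_, fun hx => ⟨0, hK.1, x, hx, by simp⟩⟩
  exact (hK.add_mem_iff.1 (show x + h₁ ∈ K by rw [e, zero_add]; exact m₂)).1

theorem preimage_mk_zero : ((↑) : T → QuotM hK.asSubmonoid) ⁻¹' {0} = K := by
  ext x
  exact mk_eq_zero_iff hK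

theorem mem_of_mk_eq {D : Set T} (hD : IsOrdIdeal Γ D) (hKD : K ⊆ D) {x y : T}
    (hx : x ∈ D) (hxy : (x : QuotM hK.asSubmonoid) = y) : y ∈ D := by
  obtain ⟨h₁, m₁, h₂, _, e⟩ := (subCon _).eq.1 hxy
  exact (hD.add_mem_iff.1 (e ▸ hD.add_mem hx (hKD m₁))).1

theorem preimage_image_mk {D : Set T} (hD : IsOrdIdeal Γ D) (hKD : K ⊆ D) :
    ((↑) : T → QuotM hK.asSubmonoid) ⁻¹' ((↑) '' D) = D :=
  Set.Subset.antisymm (fun _ ⟨_, hd, e⟩ => mem_of_mk_eq hK hD hKD hd e)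
    (Set.subset_preimage_image _ _)

theorem isOrdIdeal_preimage_mk {E : Set (QuotM hK.asSubmonoid)}
    (hE : @IsOrdIdeal Γ _ _ _ (quotAction hK) E) :
    IsOrdIdeal Γ (((↑) : T → QuotM hK.asSubmonoid) ⁻¹' E) :=
  ⟨hE.1, fun α β a b => hE.2 α β a b⟩

theorem isOrdIdeal_image_mk {D : Set T} (hD : IsOrdIdeal Γ D) (hKD : K ⊆ D) :
    @IsOrdIdeal Γ _ _ _ (quotAction hK) (((↑) : T → QuotM hK.asSubmonoid) '' D) := by
  let := quotAction hK
  refine ⟨⟨0, hD.1, rfl⟩, fun α β q r => ?_⟩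
  induction q using Quotient.inductionOn' with | h x => ?_
  induction r using Quotient.inductionOn' with | h y => ?_
  refine ⟨fun ⟨d, hd, e⟩ => ?_, fun ⟨⟨a, ha, ea⟩, ⟨b, hb, eb⟩⟩ => ?_⟩
  · have := mem_of_mk_eq hK hD hKD hd (y := α • x + β • y) e
    exact ⟨⟨x, ((hD.2 α β x y).1 this).1, rfl⟩, ⟨y, ((hD.2 α β x y).1 this).2, rfl⟩⟩
  · refine ⟨α • a + β • b, (hD.2 α β a b).2 ⟨ha, hb⟩, ?_⟩
    rw [← ea, ← eb]
    rfl

def quotIdealEmb : @OrdIdeal Γ (QuotM hK.asSubmonoid) _ _ (quotAction hK) ↪o OrdIdeal Γ T :=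
  OrderEmbedding.ofMapLEIff
    (fun E => ⟨((↑) : T → QuotM hK.asSubmonoid) ⁻¹' E.1, isOrdIdeal_preimage_mk hK E.2⟩)
    fun _ _ => Quotient.mk''_surjective.preimage_subset_preimage_iff

theorem range_quotIdealEmb : Set.range (quotIdealEmb hK) = Set.Ici ⟨K, hK⟩ := by
  ext D
  refine ⟨?_, fun hKD => ⟨⟨_, isOrdIdeal_image_mk hK D.2 hKD⟩,
    Subtype.ext (preimage_image_mk hK D.2 hKD)⟩⟩
  rintro ⟨E, rfl⟩ x hx
  show (x : QuotM hK.asSubmonoid) ∈ E.1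
  rw [(mk_eq_zero_iff hK).2 hx]
  exact E.2.1

theorem ordConnected_range_quotIdealEmb : (Set.range (quotIdealEmb hK)).OrdConnected := by
  rw [range_quotIdealEmb]
  exact Set.ordConnected_Ici

theorem quotIdealEmb_top : letI := quotAction hK; quotIdealEmb hK ⊤ = ⊤ := rfl

theorem quotIdealEmb_eq_kernel_iff (E : @OrdIdeal Γ (QuotM hK.asSubmonoid) _ _ (quotAction hK)) :
    quotIdealEmb hK E = ⟨K, hK⟩ ↔ (E : Set (QuotM hK.asSubmonoid)) = {0} :=
  Subtype.ext_iff.trans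
    ((Set.preimage_injective.2 Quotient.mk''_surjective).eq_iff' (preimage_mk_zero hK))

end QuotIdeal

theorem isSimple_quotM_iff_covBy {K : Set T} (hK : IsOrdIdeal Γ K) :
    @IsSimple Γ (QuotM hK.asSubmonoid) _ _ (quotAction hK) ↔ (⟨K, hK⟩ : OrdIdeal Γ T) ⋖ ⊤ := by
  let := quotAction hK
  obtain ⟨Z, hZ⟩ : (⟨K, hK⟩ : OrdIdeal Γ T) ∈ Set.range (quotIdealEmb hK) := by
    rw [range_quotIdealEmb]
    exact Set.mem_Ici.2 le_rfl
  rw [isSimple_iff_covBy Z ((quotIdealEmb_eq_kernel_iff hK Z).1 hZ),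
    ← (ordConnected_range_quotIdealEmb hK).apply_covBy_apply_iff, hZ, quotIdealEmb_top]

theorem isSimple_quotPair_iff_covBy {X Y : Set T} (hX : IsOrdIdeal Γ X) (hY : IsOrdIdeal Γ Y)
    (hXY : X ⊆ Y) :
    @IsSimple Γ (QuotPair hX hY) _ _ (quotPairAction hX hY) ↔
      (⟨X, hX⟩ : OrdIdeal Γ T) ⋖ ⟨Y, hY⟩ := by
  let := subtypeAction hY
  refine (isSimple_quotM_iff_covBy (restrict_isOrdIdeal hX hY)).trans ?_
  rw [← (ordConnected_range_subIdealEmb hY).apply_covBy_apply_iff, subIdealEmb_top]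
  exact Iff.of_eq (congrArg (· ⋖ _) (Subtype.ext (image_val_restrictSet hY hXY)))

theorem nonempty_compSeries_iff :
    Nonempty (CompSeries Γ T) ↔
      ∃ Z : OrdIdeal Γ T, (Z : Set T) = {0} ∧ ReflTransGen (· ⩿ ·) Z ⊤ := by
  constructor
  · rintro ⟨S⟩
    let A : ℕ → OrdIdeal Γ T := fun i => if h : i ≤ S.n then ⟨S.I i, S.ideal i h⟩ else ⊤
    have hA : ∀ i (h : i ≤ S.n), A i = ⟨S.I i, S.ideal i h⟩ := fun i h => dif_pos h
    have hstep : ∀ i < S.n, A i ⩿ A (i + 1) := fun i hi => by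
      rw [hA i hi.le, hA (i + 1) hi]
      exact ((isSimple_quotPair_iff_covBy _ _ (S.strict i hi).subset).1 (S.simple i hi)).wcovBy
    have hchain : ∀ k ≤ S.n, ReflTransGen (· ⩿ ·) (A 0) (A k) := by
      intro k hk
      induction k with
      | zero => exact .refl
      | succ k ih => exact (ih (by omega)).tail (hstep k hk)
    refine ⟨A 0, by rw [hA 0 (Nat.zero_le _)]; exact S.bot, ?_⟩
    rw [show (⊤ : OrdIdeal Γ T) = A S.n from by rw [hA S.n le_rfl]; exact Subtype.ext S.top.symm]
    exact hchain S.n le_rfl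
  · rintro ⟨Z, hZ, h⟩
    obtain ⟨n, f, rfl, hfn, hf⟩ := exists_covBy_seq_of_reflTransGen_wcovBy h
    exact ⟨{
      n := n
      I := fun i => f i
      ideal := fun i _ => (f i).2
      bot := hZ
      top := congrArg Subtype.val hfn
      strict := fun i hi => (hf i hi).lt
      simple := fun i hi => (isSimple_quotPair_iff_covBy _ _ (hf i hi).le).2 (hf i hi) }⟩

theorem nonempty_compSeries_subtype_iff {J : Set T} (hJ : IsOrdIdeal Γ J) :
    Nonempty (@CompSeries Γ ↥hJ.asSubmonoid _ _ (subtypeAction hJ)) ↔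
      ∃ Z : OrdIdeal Γ T, (Z : Set T) = {0} ∧ ReflTransGen (· ⩿ ·) Z ⟨J, hJ⟩ := by
  let := subtypeAction hJ
  rw [nonempty_compSeries_iff, ← subIdealEmb_top hJ]
  have hf := ordConnected_range_subIdealEmb hJ
  constructor
  · rintro ⟨Z, hZ, h⟩
    exact ⟨subIdealEmb hJ Z, (coe_subIdealEmb_eq_zero_iff hJ Z).2 hZ,
      (hf.reflTransGen_wcovBy_apply_iff _).2 h⟩
  · rintro ⟨Z, hZ, h⟩
    obtain ⟨Z, rfl⟩ : Z ∈ Set.range (subIdealEmb hJ) := by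
      rw [range_subIdealEmb, ← subIdealEmb_top hJ]
      exact le_of_reflTransGen_wcovBy h
    exact ⟨Z, (coe_subIdealEmb_eq_zero_iff hJ Z).1 hZ, (hf.reflTransGen_wcovBy_apply_iff _).1 h⟩

theorem nonempty_compSeries_quotM_iff {K : Set T} (hK : IsOrdIdeal Γ K) :
    Nonempty (@CompSeries Γ (QuotM hK.asSubmonoid) _ _ (quotAction hK)) ↔
      ReflTransGen (· ⩿ ·) (⟨K, hK⟩ : OrdIdeal Γ T) ⊤ := by
  let := quotAction hK
  obtain ⟨Z₀, hZ₀⟩ : (⟨K, hK⟩ : OrdIdeal Γ T) ∈ Set.range (quotIdealEmb hK) := by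
    rw [range_quotIdealEmb]
    exact Set.mem_Ici.2 le_rfl
  have hZ₀' := (quotIdealEmb_eq_kernel_iff hK Z₀).1 hZ₀
  rw [nonempty_compSeries_iff, ← hZ₀, ← quotIdealEmb_top hK,
    (ordConnected_range_quotIdealEmb hK).reflTransGen_wcovBy_apply_iff]
  exact ⟨fun ⟨Z, hZ, h⟩ => Subtype.ext (hZ.trans hZ₀'.symm) ▸ h, fun h => ⟨Z₀, hZ₀', h⟩⟩

end JH

open JH in
/-- `T` has a Γ-composition series iff both `I` and `T/I` do. -/
theorem stmt18 {Γ T : Type*} [CommGroup Γ] [AddCommMonoid T] [DistribMulAction Γ T]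
    (hT : Refinement T) {I : Set T} (hI : IsOrdIdeal Γ I) :
    Nonempty (CompSeries Γ T) ↔
      (Nonempty (@CompSeries Γ ↥hI.asSubmonoid _ _ (subtypeAction hI)) ∧
       Nonempty (@CompSeries Γ (QuotM hI.asSubmonoid) _ _ (quotAction hI))) := by
  rw [nonempty_compSeries_iff, nonempty_compSeries_subtype_iff, nonempty_compSeries_quotM_iff]
  constructor
  · rintro ⟨Z, hZ, h⟩
    have hZI : Z ≤ ⟨I, hI⟩ := by
      change (Z : Set T) ⊆ I
      rw [hZ]
      exact Set.singleton_subset_iff.2 hI.1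
    obtain ⟨hZI', hIT⟩ := (OrdIdeal.reflTransGen_wcovBy_iff hT hZI le_top).1 h
    exact ⟨⟨Z, hZ, hZI'⟩, hIT⟩
  · rintro ⟨⟨Z, hZ, hZI⟩, hIT⟩
    exact ⟨Z, hZ, hZI.trans hIT⟩
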